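/- arXiv:1106.2299 — 2 statements merged into one kernel-verified Lean document; each statement's English description precedes it below -/
import Mathlib

section
/- Let α > 0 and let γ_m (m ≥ 1) be a sequence of positive real numbers such that ν(B_{γ_m^{-α}}(ζ)) = 1/m for every m ≥ 1. Assume that ν(B_r(ζ)) > 0 for every r > 0 and that the local dimension lim_{r→0+} log ν(B_r(ζ))/log r = Δ exists at ζ with Δ > 0. Then lim_{m→∞} (log m)/(log γ_m) = α·Δ. -/
open MeasureTheory Metric Filter
open scoped ENNReal

/-- For the observable `g₂(x) = dist(x,ζ)^{-1/α}`: if `γ m > 0` satisfies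
`ν(B_{(γ m)^{-α}}(ζ)) = 1/m`, balls around `ζ` have positive measure, and the
local dimension of `ν` at `ζ` is `Δ > 0`, then `(log m)/(log γ m) → α·Δ`. -/
theorem stmt_2 {Ω : Type*} [MetricSpace Ω] [MeasurableSpace Ω] [BorelSpace Ω]
    (ν : Measure Ω) [IsProbabilityMeasure ν] (ζ : Ω) (α Δ : ℝ) (hα : 0 < α)
    (hΔ : 0 < Δ) (γ : ℕ → ℝ) (hγpos : ∀ m : ℕ, 1 ≤ m → 0 < γ m)
    (hγ : ∀ m : ℕ, 1 ≤ m → ν (ball ζ ((γ m) ^ (-α))) = 1 / (m : ℝ≥0∞))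
    (hpos : ∀ r : ℝ, 0 < r → 0 < ν (ball ζ r))
    (hdim : Tendsto (fun r : ℝ => Real.log (ν (ball ζ r)).toReal / Real.log r)
      (nhdsWithin 0 (Set.Ioi 0)) (nhds Δ)) :
    Tendsto (fun m : ℕ => Real.log m / Real.log (γ m)) atTop (nhds (α * Δ)) := by
  set f : ℕ → ℝ := fun m => (γ m) ^ (-α) with hf
  have hfpos : ∀ m : ℕ, 1 ≤ m → 0 < f m := fun m hm =>
    Real.rpow_pos_of_pos (hγpos m hm) _
  have hf0 : Tendsto f atTop (nhdsWithin 0 (Set.Ioi 0)) := by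
    rw [tendsto_nhdsWithin_iff]
    constructor
    · rw [tendsto_order]
      constructor
      · intro a ha
        filter_upwards [eventually_ge_atTop 1] with m hm
        exact ha.trans (hfpos m hm)
      · intro ε hε
        obtain ⟨n, hn⟩ := ENNReal.exists_inv_nat_lt (hpos ε hε).ne'
        filter_upwards [eventually_ge_atTop (max n 1)] with m hm
        have hm1 : 1 ≤ m := le_trans (le_max_right n 1) hm
        have hmn : n ≤ m := le_trans (le_max_left n 1) hm
        by_contra hle
        push_neg at hle
        have h1 : ν (ball ζ ε) ≤ ν (ball ζ (f m)) :=
          measure_mono (ball_subset_ball hle)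
        rw [hγ m hm1, one_div] at h1
        have h2 : ν (ball ζ ε) ≤ ((n : ℝ≥0∞))⁻¹ :=
          h1.trans (ENNReal.inv_le_inv.mpr (by exact_mod_cast hmn))
        exact hn.not_ge h2
    · filter_upwards [eventually_ge_atTop 1] with m hm
      exact hfpos m hm
  have hcomp : Tendsto
      (fun m : ℕ => Real.log (ν (ball ζ (f m))).toReal / Real.log (f m))
      atTop (nhds Δ) := hdim.comp hf0
  have heq : ∀ᶠ m in atTop,
      Real.log (ν (ball ζ (f m))).toReal / Real.log (f m)
        = (Real.log m / Real.log (γ m)) / α := by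
    filter_upwards [eventually_ge_atTop 1] with m hm
    have hm0 : (m : ℝ≥0∞) ≠ 0 := by exact_mod_cast Nat.one_le_iff_ne_zero.mp hm
    have h1 : (ν (ball ζ (f m))).toReal = 1 / (m : ℝ) := by
      rw [hγ m hm]
      simp [ENNReal.toReal_inv]
    have h2 : Real.log (f m) = -α * Real.log (γ m) :=
      Real.log_rpow (hγpos m hm) _
    rw [h1, h2, one_div, Real.log_inv, neg_mul, neg_div_neg_eq, div_div,
      mul_comm (Real.log (γ m)) α]
  have h3 : Tendsto (fun m : ℕ => (Real.log m / Real.log (γ m)) / α)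
      atTop (nhds Δ) := hcomp.congr' heq
  have h4 := h3.mul_const α
  have h5 : (fun m : ℕ => (Real.log m / Real.log (γ m)) / α * α)
      = fun m : ℕ => Real.log m / Real.log (γ m) := by
    funext m
    exact div_mul_cancel₀ _ hα.ne'
  rw [h5] at h4
  simpa [mul_comm] using h4
end

section
/- Assume that ν(B_r(ζ)) > 0 for every r > 0 and that the local dimension lim_{r→0+} log ν(B_r(ζ))/log r = Δ exists at ζ with Δ > 0. Let γ_m satisfy ν(B_{e^{-γ_m}}(ζ)) = 1/m for every m ≥ 1, and let (G_m) be a sequence of nonnegative real numbers such that m·ν(B_{exp(-(γ_m + G_m))}(ζ)) → e^{-1} as m → ∞. Then G_m = o(γ_m), i.e. lim_{m→∞} G_m/γ_m = 0. -/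
open MeasureTheory Metric Filter
open scoped ENNReal

/-- Let the local dimension of `ν` at `ζ` be `Δ > 0`, balls around `ζ` have
positive measure, `γ m` satisfy `ν(B_{e^{-γ m}}(ζ)) = 1/m`, and `G m ≥ 0` be
such that `m·ν(B_{exp(-(γ m + G m))}(ζ)) → e⁻¹`. Then `G m = o(γ m)`. -/
theorem stmt_8 {Ω : Type*} [MetricSpace Ω] [MeasurableSpace Ω] [BorelSpace Ω]
    (ν : Measure Ω) [IsProbabilityMeasure ν] (ζ : Ω) (Δ : ℝ) (hΔ : 0 < Δ)
    (γ G : ℕ → ℝ)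
    (hpos : ∀ r : ℝ, 0 < r → 0 < ν (ball ζ r))
    (hdim : Tendsto (fun r : ℝ => Real.log (ν (ball ζ r)).toReal / Real.log r)
      (nhdsWithin 0 (Set.Ioi 0)) (nhds Δ))
    (hγ : ∀ m : ℕ, 1 ≤ m → ν (ball ζ (Real.exp (-(γ m)))) = 1 / (m : ℝ≥0∞))
    (hG : ∀ m : ℕ, 0 ≤ G m)
    (hlim : Tendsto
      (fun m : ℕ => (m : ℝ) * (ν (ball ζ (Real.exp (-(γ m + G m))))).toReal)
      atTop (nhds (Real.exp (-1)))) :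
    Tendsto (fun m : ℕ => G m / γ m) atTop (nhds 0) := by
  -- γ tends to atTop
  have hγtop : Tendsto γ atTop atTop := by
    rw [Filter.tendsto_atTop]
    intro C
    have hε : 0 < ν (ball ζ (Real.exp (-C))) := hpos _ (Real.exp_pos _)
    obtain ⟨N, hN⟩ := ENNReal.exists_inv_nat_lt hε.ne'
    filter_upwards [eventually_ge_atTop (N + 1)] with m hm
    by_contra h
    push_neg at h
    have hsub : ball ζ (Real.exp (-C)) ⊆ ball ζ (Real.exp (-(γ m))) :=
      ball_subset_ball (Real.exp_le_exp.2 (by linarith))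
    have hmono := measure_mono (μ := ν) hsub
    rw [hγ m (by omega)] at hmono
    have h1 : (1 : ℝ≥0∞) / m ≤ (N : ℝ≥0∞)⁻¹ := by
      rw [one_div]
      exact ENNReal.inv_le_inv.2 (by exact_mod_cast Nat.cast_le.2 (by omega))
    exact absurd (le_trans hmono h1) (not_le.2 hN)
  -- β := γ + G tends to atTop
  set β : ℕ → ℝ := fun m => γ m + G m with hβ
  have hβtop : Tendsto β atTop atTop :=
    tendsto_atTop_mono (fun m => le_add_of_nonneg_right (hG m)) hγtop
  -- composition with hdim
  have hcomp : ∀ f : ℕ → ℝ, Tendsto f atTop atTop →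
      Tendsto (fun m => Real.log (ν (ball ζ (Real.exp (-(f m))))).toReal /
        Real.log (Real.exp (-(f m)))) atTop (nhds Δ) := by
    intro f hf
    exact hdim.comp (Real.tendsto_exp_atBot_nhdsGT.comp
      (tendsto_neg_atTop_atBot.comp hf))
  -- log m / γ m → Δ
  have hLγ : Tendsto (fun m : ℕ => Real.log m / γ m) atTop (nhds Δ) := by
    refine (hcomp γ hγtop).congr' ?_
    filter_upwards [eventually_ge_atTop 1] with m hm
    rw [hγ m hm, Real.log_exp]
    have : ((1 : ℝ≥0∞) / m).toReal = ((m : ℝ))⁻¹ := by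
      rw [one_div, ENNReal.toReal_inv]; simp
    rw [this, Real.log_inv, neg_div_neg_eq]
  -- log m / β m → Δ
  have hν'pos : ∀ m : ℕ, 0 < (ν (ball ζ (Real.exp (-(β m))))).toReal := fun m =>
    ENNReal.toReal_pos (hpos _ (Real.exp_pos _)).ne' (measure_ne_top ν _)
  have hlog1 : Tendsto (fun m : ℕ =>
      Real.log ((m : ℝ) * (ν (ball ζ (Real.exp (-(γ m + G m))))).toReal))
      atTop (nhds (-1)) := by
    have := (Real.continuousAt_log (Real.exp_pos (-1)).ne').tendsto.comp hlim
    rwa [Real.log_exp] at this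
  have hβinv : Tendsto (fun m : ℕ => (β m)⁻¹) atTop (nhds 0) :=
    tendsto_inv_atTop_zero.comp hβtop
  have hLβ : Tendsto (fun m : ℕ => Real.log m / β m) atTop (nhds Δ) := by
    have h1 : Tendsto (fun m : ℕ =>
        Real.log ((m : ℝ) * (ν (ball ζ (Real.exp (-(γ m + G m))))).toReal) * (β m)⁻¹
          - Real.log (ν (ball ζ (Real.exp (-(β m))))).toReal /
              Real.log (Real.exp (-(β m))) * (-1 : ℝ))
        atTop (nhds ((-1) * 0 - Δ * (-1))) :=
      (hlog1.mul hβinv).sub ((hcomp β hβtop).mul tendsto_const_nhds)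
    have : (-1 : ℝ) * 0 - Δ * (-1) = Δ := by ring
    rw [this] at h1
    refine h1.congr' ?_
    filter_upwards [eventually_ge_atTop 1, hβtop.eventually (eventually_gt_atTop 0)]
      with m hm hβm
    have hm0 : (0 : ℝ) < m := by exact_mod_cast hm
    rw [Real.log_exp, Real.log_mul hm0.ne' (hν'pos m).ne']
    field_simp
    ring
  -- β m / γ m → 1
  have hratio : Tendsto (fun m : ℕ => β m / γ m) atTop (nhds 1) := by
    have h1 : Tendsto (fun m : ℕ => (Real.log m / γ m) * (Real.log m / β m)⁻¹)
        atTop (nhds (Δ * Δ⁻¹)) := hLγ.mul (hLβ.inv₀ hΔ.ne')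
    rw [mul_inv_cancel₀ hΔ.ne'] at h1
    refine h1.congr' ?_
    filter_upwards [hγtop.eventually (eventually_gt_atTop 0),
      eventually_gt_atTop 2] with m hγm hm2
    have hlogm : (0 : ℝ) < Real.log m := Real.log_pos (by exact_mod_cast Nat.one_lt_cast.2 (by omega))
    rw [inv_div]
    field_simp
  -- conclude
  have h2 : Tendsto (fun m : ℕ => β m / γ m - 1) atTop (nhds 0) := by
    have := hratio.sub (tendsto_const_nhds (x := (1 : ℝ)))
    simpa using this
  refine h2.congr' ?_
  filter_upwards [hγtop.eventually (eventually_gt_atTop 0)] with m hγm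
  rw [hβ]
  field_simp
  ring
end
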